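/- A subgroup H = ⟨a^{m₁}, b^{n₁} a^s⟩ of ZM(m,n,r) (with (m₁,n₁,s) a valid subgroup parameter) is normal in ZM(m,n,r) if and only if m₁ divides r^{n₁}−1 and s = 0. -/

import Mathlib

/-!
Write `y = b^{n₁} a^s`, `R = r^{n₁}` and `N = ⟨a^{m₁}⟩`, a normal subgroup of `G`.
The commutators of `y` with `a` and `b` are `a^{1-R}` and `a^{s(r-1)}`, so they lie in `H` when
`H` is normal. On the other hand `H = ⟨y⟩ N` and `y^k = b^{n₁k} a^{s(1 + R + ⋯ + R^{k-1})}`;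
as `⟨a⟩ ∩ ⟨b⟩ = 1`, `y^k ∈ ⟨a⟩` forces `n ∣ n₁k`, and then the parameter condition puts `y^k`
in `N`. Hence `H ∩ ⟨a⟩ = N`, which turns the two commutators into `m₁ ∣ R - 1` and
`m₁ ∣ s(r - 1)`, i.e. `s = 0`. Conversely, for `s = 0` and `m₁ ∣ R - 1` the conjugates of the
generators of `H` by `a` and `b` stay in `H`.
-/

open Subgroup

theorem Subgroup.normal_closure_of_conj_mem {G : Type*} [Group G] [Finite G] {S T : Set G}
    (hT : closure T = ⊤) (h : ∀ t ∈ T, ∀ x ∈ S, t⁻¹ * x * t ∈ closure S) :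
    (closure S).Normal := by
  rw [← normalizer_eq_top_iff, eq_top_iff, ← hT, closure_le]
  intro t ht
  rw [SetLike.mem_coe, ← inv_mem_iff]
  have hmap : (closure S).map (MulAut.conj t⁻¹).toMonoidHom ≤ closure S := by
    rw [MonoidHom.map_closure, closure_le]
    rintro _ ⟨x, hx, rfl⟩
    simpa using h t ht x hx
  exact mem_normalizer_fintype fun x hx => hmap ⟨x, hx, rfl⟩

theorem dvd_of_zpow_mem_zpowers_pow {G : Type*} [Group G] {a : G} {d : ℕ}
    (hd : d ∣ orderOf a) {w : ℤ} (hw : a ^ w ∈ zpowers (a ^ d)) : (d : ℤ) ∣ w := by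
  obtain ⟨c, hc⟩ := hw
  have hdvd : (orderOf a : ℤ) ∣ w - d * c := by
    rw [orderOf_dvd_iff_zpow_eq_one, zpow_sub, ← hc]
    simp [zpow_mul]
  simpa using (Int.natCast_dvd_natCast.mpr hd).trans hdvd |>.add (dvd_mul_right (d : ℤ) c)

theorem natCast_dvd_natCast_sub_one_iff {d x : ℕ} (h : x ≠ 0 ∨ d = 1) :
    (d : ℤ) ∣ (x : ℤ) - 1 ↔ d ∣ x - 1 := by
  rcases h with hx | rfl
  · rw [← Int.natCast_dvd_natCast, Nat.cast_sub (Nat.one_le_iff_ne_zero.mpr hx), Nat.cast_one]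
  · simp

theorem isCoprime_natCast_sub_one {d x : ℕ} (h : x ≠ 0 ∨ d = 1) (hcop : d.Coprime (x - 1)) :
    IsCoprime (d : ℤ) ((x : ℤ) - 1) := by
  rcases h with hx | rfl
  · rw [← Nat.cast_one, ← Nat.cast_sub (Nat.one_le_iff_ne_zero.mpr hx)]
    exact Nat.isCoprime_iff_coprime.mpr hcop
  · exact isCoprime_one_left

section Metacyclic

variable {G : Type*} [Group G] {a b : G} {r : ℕ}

theorem inv_pow_mul_mul_pow (hrel : b⁻¹ * a * b = a ^ r) (j : ℕ) :
    (b ^ j)⁻¹ * a * b ^ j = a ^ r ^ j := by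
  induction j with
  | zero => simp
  | succ j ih =>
    calc (b ^ (j + 1))⁻¹ * a * b ^ (j + 1) = b⁻¹ * ((b ^ j)⁻¹ * a * b ^ j) * b := by group
      _ = (b⁻¹ * a * b) ^ r ^ j := by
        rw [ih]; simpa using (conj_pow (a := b⁻¹) (b := a) (i := r ^ j)).symm
      _ = a ^ r ^ (j + 1) := by rw [hrel, ← pow_mul, pow_succ']

theorem inv_pow_mul_zpow_mul_pow (hrel : b⁻¹ * a * b = a ^ r) (j : ℕ) (t : ℤ) :
    (b ^ j)⁻¹ * a ^ t * b ^ j = a ^ (t * r ^ j) := by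
  have h := conj_zpow (a := (b ^ j)⁻¹) (b := a) (i := t)
  rw [inv_inv] at h
  rw [← h, inv_pow_mul_mul_pow hrel, ← zpow_natCast, ← zpow_mul, mul_comm]
  norm_cast

theorem inv_pow_mul_pow_mul_pow (hrel : b⁻¹ * a * b = a ^ r) (j t : ℕ) :
    (b ^ j)⁻¹ * a ^ t * b ^ j = a ^ (t * r ^ j) := by
  exact_mod_cast inv_pow_mul_zpow_mul_pow hrel j t

theorem pow_mul_pow_eq_pow_mul_pow (hrel : b⁻¹ * a * b = a ^ r) (t j : ℕ) :
    a ^ t * b ^ j = b ^ j * a ^ (t * r ^ j) := by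
  rw [← inv_pow_mul_pow_mul_pow hrel]; group

theorem inv_mul_pow_mul (hrel : b⁻¹ * a * b = a ^ r) (j : ℕ) :
    a⁻¹ * b ^ j * a = b ^ j * a ^ (1 - (r : ℤ) ^ j) := by
  have h := inv_pow_mul_zpow_mul_pow hrel j (-1)
  calc a⁻¹ * b ^ j * a = b ^ j * ((b ^ j)⁻¹ * a ^ (-1 : ℤ) * b ^ j) * a := by group
    _ = b ^ j * a ^ (1 - (r : ℤ) ^ j) := by rw [h]; group

theorem pow_mul_pow_pow_eq (hrel : b⁻¹ * a * b = a ^ r) (j t k : ℕ) :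
    (b ^ j * a ^ t) ^ k = b ^ (j * k) * a ^ (t * ∑ i ∈ Finset.range k, (r ^ j) ^ i) := by
  induction k with
  | zero => simp
  | succ k ih =>
    rw [pow_succ', ih, Finset.sum_range_succ, mul_assoc, ← mul_assoc (a ^ t),
      pow_mul_pow_eq_pow_mul_pow hrel, mul_assoc, ← pow_add, ← mul_assoc, ← pow_add, ← pow_mul]
    congr 2 <;> ring

theorem zpow_one_sub_pow_mem_of_normal {H : Subgroup G} [hH : H.Normal]
    (hrel : b⁻¹ * a * b = a ^ r) {j t : ℕ} (hy : b ^ j * a ^ t ∈ H) :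
    a ^ (1 - (r : ℤ) ^ j) ∈ H := by
  have h := mul_mem (inv_mem hy) (hH.conj_mem _ hy a⁻¹)
  have e : (b ^ j * a ^ t)⁻¹ * (a⁻¹ * (b ^ j * a ^ t) * a) = a ^ (1 - (r : ℤ) ^ j) :=
    calc _ = (a ^ t)⁻¹ * (b ^ j)⁻¹ * (a⁻¹ * b ^ j * a) * a ^ t := by group
      _ = _ := by rw [inv_mul_pow_mul hrel]; group
  rwa [inv_inv, e] at h

theorem zpow_mul_sub_one_mem_of_normal {H : Subgroup G} [hH : H.Normal]
    (hrel : b⁻¹ * a * b = a ^ r) {j t : ℕ} (hy : b ^ j * a ^ t ∈ H) :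
    a ^ ((t : ℤ) * ((r : ℤ) - 1)) ∈ H := by
  have h := mul_mem (inv_mem hy) (hH.conj_mem _ hy b⁻¹)
  have e : (b ^ j * a ^ t)⁻¹ * (b⁻¹ * (b ^ j * a ^ t) * b) = a ^ ((t : ℤ) * ((r : ℤ) - 1)) :=
    calc _ = (a ^ (t : ℤ))⁻¹ * ((b ^ 1)⁻¹ * a ^ (t : ℤ) * b ^ 1) := by group
      _ = _ := by rw [inv_pow_mul_zpow_mul_pow hrel]; group
  rwa [inv_inv, e] at h

variable [Finite G]

theorem zpowers_pow_normal (hrel : b⁻¹ * a * b = a ^ r) (hgen : closure {a, b} = ⊤) (d : ℕ) :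
    (zpowers (a ^ d)).Normal := by
  rw [zpowers_eq_closure]
  refine normal_closure_of_conj_mem hgen ?_
  simp only [Set.mem_insert_iff, Set.mem_singleton_iff, forall_eq_or_imp, forall_eq]
  constructor
  · exact subset_closure (by rw [mul_assoc, ← pow_succ, pow_succ', inv_mul_cancel_left]; rfl)
  · have h := inv_pow_mul_pow_mul_pow hrel 1 d
    rw [pow_one, pow_one, pow_mul] at h
    rw [h]
    exact pow_mem (subset_closure (Set.mem_singleton _)) r

theorem mem_zpowers_pow_of_mem_closure (hrel : b⁻¹ * a * b = a ^ r)
    (hgen : closure {a, b} = ⊤) (hcop : (orderOf a).Coprime (orderOf b)) {m₁ n₁ s : ℕ}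
    (hn₁ : n₁ ∣ orderOf b)
    (hparam : m₁ ∣ s * ∑ i ∈ Finset.range (orderOf b / n₁), (r ^ n₁) ^ i) {x : G}
    (hxa : x ∈ zpowers a) (hx : x ∈ closure {a ^ m₁, b ^ n₁ * a ^ s}) :
    x ∈ zpowers (a ^ m₁) := by
  set y := b ^ n₁ * a ^ s
  set q := orderOf b / n₁
  have hN : (zpowers (a ^ m₁)).Normal := zpowers_pow_normal hrel hgen m₁
  have hNa : zpowers (a ^ m₁) ≤ zpowers a := zpowers_le.mpr (pow_mem (mem_zpowers a) m₁)
  have hyq : y ^ q ∈ zpowers (a ^ m₁) := by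
    obtain ⟨c, hc⟩ := hparam
    rw [pow_mul_pow_pow_eq hrel, Nat.mul_div_cancel' hn₁, pow_orderOf_eq_one, one_mul, hc, pow_mul]
    exact pow_mem (mem_zpowers _) c
  rw [Set.insert_eq, Subgroup.closure_union, ← zpowers_eq_closure, ← zpowers_eq_closure, sup_comm,
    ← SetLike.mem_coe, mul_normal] at hx
  obtain ⟨_, hu, z, hz, rfl⟩ := hx
  obtain ⟨k, rfl⟩ := mem_powers_iff_mem_zpowers.mpr hu
  have hbk : b ^ (n₁ * k) = 1 := by
    have hdisj : Disjoint (zpowers a) (zpowers b) :=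
      disjoint_of_coprime_natCard (by rwa [Nat.card_zpowers, Nat.card_zpowers])
    refine disjoint_def.mp hdisj ?_ (npow_mem_zpowers b _)
    have h : b ^ (n₁ * k) = y ^ k * z * z⁻¹ * (a ^ (s * ∑ i ∈ Finset.range k, (r ^ n₁) ^ i))⁻¹ := by
      rw [pow_mul_pow_pow_eq hrel]; group
    rw [h]
    exact mul_mem (mul_mem hxa (inv_mem (hNa hz))) (inv_mem (npow_mem_zpowers a _))
  obtain ⟨j, rfl⟩ : q ∣ k := by
    have hn₁0 : 0 < n₁ := Nat.pos_of_dvd_of_pos hn₁ (orderOf_pos b)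
    refine Nat.dvd_of_mul_dvd_mul_left hn₁0 ?_
    rw [Nat.mul_div_cancel' hn₁]
    exact orderOf_dvd_of_pow_eq_one hbk
  simp only [pow_mul]
  exact mul_mem (pow_mem hyq j) hz

theorem dvd_of_zpow_mem_closure (hrel : b⁻¹ * a * b = a ^ r)
    (hgen : closure {a, b} = ⊤) (hcop : (orderOf a).Coprime (orderOf b)) {m₁ n₁ s : ℕ}
    (hm₁ : m₁ ∣ orderOf a) (hn₁ : n₁ ∣ orderOf b)
    (hparam : m₁ ∣ s * ∑ i ∈ Finset.range (orderOf b / n₁), (r ^ n₁) ^ i) {w : ℤ}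
    (hw : a ^ w ∈ closure {a ^ m₁, b ^ n₁ * a ^ s}) : (m₁ : ℤ) ∣ w :=
  dvd_of_zpow_mem_zpowers_pow hm₁ <|
    mem_zpowers_pow_of_mem_closure hrel hgen hcop hn₁ hparam (zpow_mem_zpowers a w) hw

theorem normal_closure_pow_pow (hrel : b⁻¹ * a * b = a ^ r) (hgen : closure {a, b} = ⊤)
    {m₁ n₁ : ℕ} (hR : (m₁ : ℤ) ∣ (r : ℤ) ^ n₁ - 1) :
    (closure {a ^ m₁, b ^ n₁}).Normal := by
  have hN := zpowers_pow_normal hrel hgen m₁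
  have hNH : zpowers (a ^ m₁) ≤ closure {a ^ m₁, b ^ n₁} := by
    rw [zpowers_eq_closure]; exact closure_mono (by simp)
  have hb : b ^ n₁ ∈ closure {a ^ m₁, b ^ n₁} := subset_closure (by simp)
  refine normal_closure_of_conj_mem hgen ?_
  simp only [Set.mem_insert_iff, Set.mem_singleton_iff, forall_eq_or_imp, forall_eq]
  refine ⟨⟨?_, ?_⟩, ?_, ?_⟩
  · exact hNH (by simpa using hN.conj_mem _ (mem_zpowers _) a⁻¹)
  · rw [inv_mul_pow_mul hrel]
    obtain ⟨c, hc⟩ := dvd_sub_comm.mp hR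
    rw [hc, zpow_mul, zpow_natCast]
    exact mul_mem hb (hNH (zpow_mem (mem_zpowers _) c))
  · exact hNH (by simpa using hN.conj_mem _ (mem_zpowers _) b⁻¹)
  · convert hb using 1; group

end Metacyclic

theorem stmt_17_general {G : Type*} [Group G] [Finite G]
    (m n r : ℕ)
    (hgcd1 : Nat.gcd m n = 1) (hgcd2 : Nat.gcd m (r - 1) = 1)
    (a b : G) (ha : orderOf a = m) (hb : orderOf b = n)
    (hrel : b⁻¹ * a * b = a ^ r)
    (hgen : Subgroup.closure {a, b} = ⊤)
    (m₁ n₁ s : ℕ) (hm₁ : m₁ ∣ m) (hn₁ : n₁ ∣ n) (hs : s < m₁)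
    (hparam : m₁ ∣ s * ∑ i ∈ Finset.range (n / n₁), r ^ (n₁ * i)) :
    (Subgroup.closure {a ^ m₁, b ^ n₁ * a ^ s} : Subgroup G).Normal ↔
      (m₁ ∣ r ^ n₁ - 1 ∧ s = 0) := by
  subst ha hb
  -- `r - 1` is truncated: for `r = 0` the hypothesis `hgcd2` says `orderOf a = 1`.
  have hr : r ≠ 0 ∨ m₁ = 1 := by
    rcases eq_or_ne r 0 with rfl | hr
    · rw [Nat.zero_sub, Nat.gcd_zero_right] at hgcd2
      exact .inr (Nat.dvd_one.mp (hgcd2 ▸ hm₁))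
    · exact .inl hr
  have hR := natCast_dvd_natCast_sub_one_iff (d := m₁) (hr.imp_left (pow_ne_zero n₁))
  push_cast at hR
  constructor
  · intro hH
    have hy : b ^ n₁ * a ^ s ∈ closure {a ^ m₁, b ^ n₁ * a ^ s} := subset_closure (by simp)
    have hdvd {w : ℤ} (hw : a ^ w ∈ closure {a ^ m₁, b ^ n₁ * a ^ s}) : (m₁ : ℤ) ∣ w :=
      dvd_of_zpow_mem_closure hrel hgen hgcd1 hm₁ hn₁ (by simpa only [pow_mul] using hparam) hw
    have hms : (m₁ : ℤ) ∣ s :=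
      (isCoprime_natCast_sub_one hr (Nat.Coprime.coprime_dvd_left hm₁ hgcd2)).dvd_of_dvd_mul_right
        (hdvd (zpow_mul_sub_one_mem_of_normal hrel hy))
    exact ⟨hR.mp (dvd_sub_comm.mp (hdvd (zpow_one_sub_pow_mem_of_normal hrel hy))),
      Nat.eq_zero_of_dvd_of_lt (Int.natCast_dvd_natCast.mp hms) hs⟩
  · rintro ⟨h, rfl⟩
    rw [pow_zero, mul_one]
    exact normal_closure_pow_pow hrel hgen (hR.mpr h)

/-- The subgroup `⟨a^{m₁}, b^{n₁} a^s⟩` of `ZM(m,n,r)` is normal iff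
`m₁ ∣ r^{n₁}-1` and `s = 0`. -/
theorem stmt_17 {G : Type*} [Group G] [Finite G]
    (m n r : ℕ) (hm : 0 < m) (hn : 0 < n)
    (hgcd1 : Nat.gcd m n = 1) (hgcd2 : Nat.gcd m (r - 1) = 1)
    (hrn : r ^ n % m = 1 % m)
    (a b : G) (ha : orderOf a = m) (hb : orderOf b = n)
    (hrel : b⁻¹ * a * b = a ^ r)
    (hgen : Subgroup.closure {a, b} = ⊤)
    (hcard : Nat.card G = m * n)
    (m₁ n₁ s : ℕ) (hm₁ : m₁ ∣ m) (hn₁ : n₁ ∣ n) (hs : s < m₁)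
    (hparam : m₁ ∣ s * ∑ i ∈ Finset.range (n / n₁), r ^ (n₁ * i)) :
    (Subgroup.closure {a ^ m₁, b ^ n₁ * a ^ s} : Subgroup G).Normal ↔
      (m₁ ∣ r ^ n₁ - 1 ∧ s = 0) :=
  stmt_17_general m n r hgcd1 hgcd2 a b ha hb hrel hgen m₁ n₁ s hm₁ hn₁ hs hparam
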